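/- If F is C² near y₀ > 0 with F(y₀) > 0 and F'(y₀) = 0, and F satisfies β² y² F F'' = β y (F')²(β y − F) + β(α−2) y F F' + α F²(−F' − 1) with α < 0 and β = 1 − α, then F''(y₀) > 0; hence every interior critical point of a positive solution is a strict local minimum. -/

import Mathlib

theorem stmt_12_general (α : ℝ) (hα : α < 0) (F : ℝ → ℝ) (y₀ : ℝ) (hy₀ : 0 < y₀)
    (hode : ∀ y : ℝ, 0 < y →
      (1 - α) ^ 2 * y ^ 2 * F y * deriv (deriv F) y =
        (1 - α) * y * (deriv F y) ^ 2 * ((1 - α) * y - F y) +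
          (1 - α) * (α - 2) * y * F y * deriv F y +
          α * (F y) ^ 2 * (-(deriv F y) - 1))
    (hpos : 0 < F y₀) (hcrit : deriv F y₀ = 0) :
    0 < deriv (deriv F) y₀ := by
  have hβ : 0 < 1 - α := by linarith
  have hreduced : (1 - α) ^ 2 * y₀ ^ 2 * F y₀ * deriv (deriv F) y₀ = -α * F y₀ ^ 2 := by
    rw [hode y₀ hy₀, hcrit]
    ring
  have hrhs : 0 < -α * F y₀ ^ 2 := mul_pos (neg_pos.mpr hα) (pow_pos hpos 2)
  exact pos_of_mul_pos_right (hreduced ▸ hrhs) (by positivity)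

/-- Maximum principle: for `α < 0`, `β = 1-α`, any interior critical
point `y₀ > 0` with `F(y₀) > 0` of a solution of the rarefaction ODE
satisfies `F''(y₀) > 0`, hence is a strict local minimum. -/
theorem stmt_12 (α : ℝ) (hα : α < 0) (F : ℝ → ℝ) (y₀ : ℝ) (hy₀ : 0 < y₀)
    (hF : ContDiffAt ℝ 2 F y₀)
    (hode : ∀ y : ℝ, 0 < y →
      (1 - α) ^ 2 * y ^ 2 * F y * deriv (deriv F) y =
        (1 - α) * y * (deriv F y) ^ 2 * ((1 - α) * y - F y) +
          (1 - α) * (α - 2) * y * F y * deriv F y +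
          α * (F y) ^ 2 * (-(deriv F y) - 1))
    (hpos : 0 < F y₀) (hcrit : deriv F y₀ = 0) :
    0 < deriv (deriv F) y₀ :=
  stmt_12_general α hα F y₀ hy₀ hode hpos hcrit
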